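/- Let φ be a linear form with rational coefficients satisfying property N and let (b_k) be a sequence of integers. There exists a strictly increasing φ-Sidon sequence of positive integers (a_k) such that for every prime p, lim_{k→∞} |a_k − b_k|_p = 0. -/
import Mathlib


open Finset

variable {F : Type*} [Field F] {V : Type*} [AddCommGroup V] [Module F V]

/-- The linear form with coefficients `c` has property N: there do not exist disjoint
subsets `I₁`, `I₂` of `{1,…,h}`, not both empty, with equal coefficient subset sums. -/
def PropN {h : ℕ} (c : Fin h → F) : Prop :=
  ¬ ∃ I₁ I₂ : Finset (Fin h), Disjoint I₁ I₂ ∧ ¬(I₁ = ∅ ∧ I₂ = ∅) ∧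
      ∑ i ∈ I₁, c i = ∑ i ∈ I₂, c i

/-- `A` is a Sidon set for the linear form `φ = ∑ cᵢ xᵢ`. -/
def IsSidonSet {h : ℕ} (c : Fin h → F) (A : Set V) : Prop :=
  A.Nonempty ∧ ∀ a a' : Fin h → V, (∀ i, a i ∈ A) → (∀ i, a' i ∈ A) →
    ∑ i, c i • a i = ∑ i, c i • a' i → a = a'

/-- `Φ_J(A,b) = φ_J(A) + (∑_{j ∈ Jᶜ} c_j) • b`. -/
def PhiJ {h : ℕ} (c : Fin h → F) (J : Finset (Fin h)) (A : Set V) (b : V) : Set V :=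
  {w | ∃ f : Fin h → V, (∀ j ∈ J, f j ∈ A) ∧
    w = (∑ j ∈ J, c j • f j) + (∑ j ∈ Jᶜ, c j) • b}

def PropN' {h : ℕ} (c : Fin h → ℚ) : Prop :=
  ¬ ∃ I₁ I₂ : Finset (Fin h), Disjoint I₁ I₂ ∧ ¬(I₁ = ∅ ∧ I₂ = ∅) ∧
      ∑ i ∈ I₁, c i = ∑ i ∈ I₂, c i

def deltaSet {h : ℕ} (c : Fin h → ℚ) : Finset ℚ :=
  ((univ : Finset (Finset (Fin h) × Finset (Fin h))).filter
    (fun P => Disjoint P.1 P.2 ∧ ¬(P.1 = ∅ ∧ P.2 = ∅))).image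
    (fun P => |∑ i ∈ P.1, c i - ∑ i ∈ P.2, c i|)

noncomputable def deltaC {h : ℕ} (c : Fin h → ℚ) : ℚ :=
  (insert 1 (deltaSet c)).min' (insert_nonempty _ _)

lemma deltaC_pos {h : ℕ} {c : Fin h → ℚ} (hN : PropN' c) : 0 < deltaC c := by
  have key : ∀ q ∈ insert 1 (deltaSet c), 0 < q := by
    intro q hq
    rcases Finset.mem_insert.mp hq with h1 | h2
    · rw [h1]; norm_num
    · rcases Finset.mem_image.mp h2 with ⟨P, hP, hPe⟩
      rcases Finset.mem_filter.mp hP with ⟨-, hdis, hne⟩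
      have hne0 : ∑ i ∈ P.1, c i - ∑ i ∈ P.2, c i ≠ 0 := by
        intro h0
        exact hN ⟨P.1, P.2, hdis, hne, by linarith [sub_eq_zero.mp h0]⟩
      rw [← hPe]
      exact abs_pos.mpr hne0
  exact key _ (Finset.min'_mem _ _)

lemma deltaC_le {h : ℕ} (c : Fin h → ℚ) {I₁ I₂ : Finset (Fin h)}
    (hdis : Disjoint I₁ I₂) (hne : ¬(I₁ = ∅ ∧ I₂ = ∅)) :
    deltaC c ≤ |∑ i ∈ I₁, c i - ∑ i ∈ I₂, c i| := by
  apply Finset.min'_le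
  exact Finset.mem_insert.mpr (Or.inr (Finset.mem_image.mpr
    ⟨(I₁, I₂), Finset.mem_filter.mpr ⟨Finset.mem_univ _, hdis, hne⟩, rfl⟩))

lemma abs_diff_le_C0 {h : ℕ} (c : Fin h → ℚ) {I₁ I₂ : Finset (Fin h)}
    (hdis : Disjoint I₁ I₂) :
    |∑ i ∈ I₁, c i - ∑ i ∈ I₂, c i| ≤ ∑ i, |c i| := by
  calc |∑ i ∈ I₁, c i - ∑ i ∈ I₂, c i| ≤ |∑ i ∈ I₁, c i| + |∑ i ∈ I₂, c i| :=
        abs_sub _ _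
    _ ≤ (∑ i ∈ I₁, |c i|) + ∑ i ∈ I₂, |c i| := by
        gcongr <;> exact Finset.abs_sum_le_sum_abs _ _
    _ = ∑ i ∈ I₁ ∪ I₂, |c i| := (Finset.sum_union hdis).symm
    _ ≤ ∑ i, |c i| := Finset.sum_le_sum_of_subset_of_nonneg (Finset.subset_univ _)
        (fun i _ _ => abs_nonneg _)

lemma sidon_core {h : ℕ} (c : Fin h → ℚ) (hN : PropN' c) (a : ℕ → ℚ)
    (hpos : ∀ n, 0 < a n)
    (hgrow : ∀ k, (∑ i, |c i|) * ∑ n ∈ range k, a n < deltaC c * a k)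
    (x y : Fin h → ℕ) (hs : ∑ i, c i * a (x i) = ∑ i, c i * a (y i)) : x = y := by
  by_contra hne
  set U : Finset (Fin h) := univ.filter (fun i => x i ≠ y i) with hU
  have hUne : U.Nonempty := by
    rcases Function.ne_iff.mp hne with ⟨i, hi⟩
    exact ⟨i, by simp [hU, hi]⟩
  set N := U.sup (fun i => max (x i) (y i)) with hNdef
  obtain ⟨i₀, hi₀U, hi₀⟩ := Finset.exists_mem_eq_sup U hUne (fun i => max (x i) (y i))
  set d : ℕ → ℚ := fun n => (∑ i ∈ U.filter (fun i => x i = n), c i)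
      - (∑ i ∈ U.filter (fun i => y i = n), c i) with hd
  -- restrict the sum equality to U
  have hUsum : ∑ i ∈ U, c i * a (x i) = ∑ i ∈ U, c i * a (y i) := by
    have hx := (Finset.sum_filter_add_sum_filter_not univ (fun i => x i ≠ y i)
      (fun i => c i * a (x i)))
    have hy := (Finset.sum_filter_add_sum_filter_not univ (fun i => x i ≠ y i)
      (fun i => c i * a (y i)))
    have heq : ∑ i ∈ univ.filter (fun i => ¬ x i ≠ y i), c i * a (x i)
        = ∑ i ∈ univ.filter (fun i => ¬ x i ≠ y i), c i * a (y i) := by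
      refine Finset.sum_congr rfl fun i hi => ?_
      have : x i = y i := not_not.mp (Finset.mem_filter.mp hi).2
      rw [this]
    have := hs
    rw [← hx, ← hy, heq] at this
    exact add_right_cancel this
  -- fiberwise rewriting
  have hsupN : ∀ i ∈ U, max (x i) (y i) ≤ N := fun i hi =>
    Finset.le_sup (f := fun i => max (x i) (y i)) hi
  have hmapsx : ∀ i ∈ U, x i ∈ range (N + 1) := fun i hi =>
    mem_range.mpr (Nat.lt_succ_of_le (le_trans (le_max_left _ _) (hsupN i hi)))
  have hmapsy : ∀ i ∈ U, y i ∈ range (N + 1) := fun i hi =>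
    mem_range.mpr (Nat.lt_succ_of_le (le_trans (le_max_right _ _) (hsupN i hi)))
  have hfib : ∀ (g : Fin h → ℕ), (∀ i ∈ U, g i ∈ range (N + 1)) →
      ∑ i ∈ U, c i * a (g i)
        = ∑ n ∈ range (N + 1), (∑ i ∈ U.filter (fun i => g i = n), c i) * a n := by
    intro g hg
    rw [← Finset.sum_fiberwise_of_maps_to hg (fun i => c i * a (g i))]
    refine Finset.sum_congr rfl fun n _ => ?_
    rw [Finset.sum_mul]
    refine Finset.sum_congr rfl fun i hi => ?_
    rw [(Finset.mem_filter.mp hi).2]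
  have hzero : ∑ n ∈ range (N + 1), d n * a n = 0 := by
    have := hUsum
    rw [hfib x hmapsx, hfib y hmapsy] at this
    have h2 : ∑ n ∈ range (N + 1), d n * a n
        = ∑ n ∈ range (N + 1), (∑ i ∈ U.filter (fun i => x i = n), c i) * a n
          - ∑ n ∈ range (N + 1), (∑ i ∈ U.filter (fun i => y i = n), c i) * a n := by
      rw [← Finset.sum_sub_distrib]
      exact Finset.sum_congr rfl fun n _ => by rw [hd]; ring
    rw [h2, this, sub_self]
  -- disjointness of fibers
  have hdis : ∀ n, Disjoint (U.filter (fun i => x i = n)) (U.filter (fun i => y i = n)) := by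
    intro n
    rw [Finset.disjoint_left]
    intro i h1 h2
    have hx1 := Finset.mem_filter.mp h1
    have hy1 := Finset.mem_filter.mp h2
    have : x i ≠ y i := (Finset.mem_filter.mp hx1.1).2
    exact this (hx1.2.trans hy1.2.symm)
  -- at N the fibers are not both empty
  have hnb : ¬(U.filter (fun i => x i = N) = ∅ ∧ U.filter (fun i => y i = N) = ∅) := by
    rintro ⟨he1, he2⟩
    rcases max_cases (x i₀) (y i₀) with ⟨hm, -⟩ | ⟨hm, -⟩
    · have : i₀ ∈ U.filter (fun i => x i = N) :=
        Finset.mem_filter.mpr ⟨hi₀U, by rw [← hm, ← hi₀]⟩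
      simp [he1] at this
    · have : i₀ ∈ U.filter (fun i => y i = N) :=
        Finset.mem_filter.mpr ⟨hi₀U, by rw [← hm, ← hi₀]⟩
      simp [he2] at this
  have hδN : deltaC c ≤ |d N| := deltaC_le c (hdis N) hnb
  have hC0 : ∀ n, |d n| ≤ ∑ i, |c i| := fun n => abs_diff_le_C0 c (hdis n)
  -- contradiction
  have hz2 : d N * a N = -∑ n ∈ range N, d n * a n := by
    have := hzero
    rw [Finset.sum_range_succ] at this
    linarith
  have hchain : |d N| * a N < |d N| * a N := by
    calc |d N| * a N = |d N * a N| := by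
          rw [abs_mul, abs_of_pos (hpos N)]
      _ = |∑ n ∈ range N, d n * a n| := by rw [hz2, abs_neg]
      _ ≤ ∑ n ∈ range N, |d n * a n| := Finset.abs_sum_le_sum_abs _ _
      _ ≤ ∑ n ∈ range N, (∑ i, |c i|) * a n := by
          refine Finset.sum_le_sum fun n _ => ?_
          rw [abs_mul, abs_of_pos (hpos n)]
          exact mul_le_mul_of_nonneg_right (hC0 n) (hpos n).le
      _ = (∑ i, |c i|) * ∑ n ∈ range N, a n := by rw [Finset.mul_sum]
      _ < deltaC c * a N := hgrow N
      _ ≤ |d N| * a N := mul_le_mul_of_nonneg_right hδN (hpos N).le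
  exact lt_irrefl _ hchain

def Mseq (k : ℕ) : ℤ := (k.factorial : ℤ) ^ k

lemma Mseq_pos (k : ℕ) : 0 < Mseq k :=
  pow_pos (by exact_mod_cast k.factorial_pos) k

def stepFn (R : ℚ) (b : ℕ → ℤ) (k : ℕ) (s : ℤ) : ℤ :=
  b k + Mseq k * (max 0 (⌈R * (s : ℚ)⌉ + 2 - b k))

lemma stepFn_dvd (R : ℚ) (b : ℕ → ℤ) (k : ℕ) (s : ℤ) :
    Mseq k ∣ stepFn R b k s - b k := by
  rw [stepFn]; ring_nf; exact Dvd.intro _ rfl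

lemma stepFn_gt (R : ℚ) (b : ℕ → ℤ) (k : ℕ) {s : ℤ} (hs : 0 ≤ s) :
    R * (s : ℚ) + 1 < (stepFn R b k s : ℚ) := by
  set t : ℤ := max 0 (⌈R * (s : ℚ)⌉ + 2 - b k) with ht
  have ht0 : 0 ≤ t := le_max_left _ _
  have ht1 : ⌈R * (s : ℚ)⌉ + 2 - b k ≤ t := le_max_right _ _
  have hM : 1 ≤ Mseq k := Mseq_pos k
  have h1 : t ≤ Mseq k * t := le_mul_of_one_le_left ht0 hM
  have h2 : ⌈R * (s : ℚ)⌉ + 2 ≤ stepFn R b k s := by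
    rw [stepFn, ← ht]; linarith
  have h3 : R * (s : ℚ) ≤ (⌈R * (s : ℚ)⌉ : ℚ) := Int.le_ceil _
  have h4 : ((⌈R * (s : ℚ)⌉ + 2 : ℤ) : ℚ) ≤ (stepFn R b k s : ℚ) := by exact_mod_cast h2
  push_cast at h4
  linarith

def seqAux (R : ℚ) (b : ℕ → ℤ) : ℕ → ℤ × ℤ
  | 0 => (stepFn R b 0 0, stepFn R b 0 0)
  | k + 1 =>
    let s := (seqAux R b k).2
    (stepFn R b (k + 1) s, s + stepFn R b (k + 1) s)

lemma seqAux_snd (R : ℚ) (b : ℕ → ℤ) (k : ℕ) :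
    (seqAux R b k).2 = ∑ n ∈ range (k + 1), (seqAux R b n).1 := by
  induction k with
  | zero => simp [seqAux]
  | succ k ih =>
    rw [Finset.sum_range_succ, ← ih]
    rfl

lemma seqAux_fst (R : ℚ) (b : ℕ → ℤ) (k : ℕ) :
    (seqAux R b k).1 = stepFn R b k (∑ n ∈ range k, (seqAux R b n).1) := by
  cases k with
  | zero => simp [seqAux]
  | succ k => rw [show (seqAux R b (k+1)).1 = stepFn R b (k+1) (seqAux R b k).2 from rfl,
      seqAux_snd]

open Filter Topology in
theorem padic_sidon_asymptotic {h : ℕ} (c : Fin h → ℚ) (hN : PropN c)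
    (b : ℕ → ℤ) :
    ∃ a : ℕ → ℤ, StrictMono a ∧ (∀ k, 0 < a k) ∧
      IsSidonSet c ((fun n : ℤ => (n : ℚ)) '' Set.range a) ∧
      ∀ p : ℕ, p.Prime →
        Tendsto (fun k => ((padicNorm p ((a k : ℚ) - (b k : ℚ))) : ℝ)) atTop (nhds 0) := by
  classical
  have hN' : PropN' c := hN
  have hδ : 0 < deltaC c := deltaC_pos hN'
  have hC₀0 : 0 ≤ ∑ i, |c i| := Finset.sum_nonneg fun i _ => abs_nonneg _
  set C₀ : ℚ := ∑ i, |c i| with hC₀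
  set R : ℚ := C₀ / deltaC c + 1 with hRdef
  have hR1 : 1 ≤ R := by
    have : 0 ≤ C₀ / deltaC c := div_nonneg hC₀0 hδ.le
    rw [hRdef]; linarith
  set a : ℕ → ℤ := fun k => (seqAux R b k).1 with ha
  have haf : ∀ k, a k = stepFn R b k (∑ n ∈ range k, a n) := fun k => seqAux_fst R b k
  have key : ∀ k, 0 ≤ (∑ n ∈ range k, ((a n : ℚ))) ∧
      R * (∑ n ∈ range k, ((a n : ℚ))) + 1 < (a k : ℚ) := by
    intro k
    induction k using Nat.strong_induction_on with
    | _ k ih =>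
      have hs0 : 0 ≤ ∑ n ∈ range k, ((a n : ℚ)) := by
        refine Finset.sum_nonneg fun n hn => ?_
        obtain ⟨h1, h2⟩ := ih n (mem_range.mp hn)
        nlinarith
      refine ⟨hs0, ?_⟩
      have hsz : (0 : ℤ) ≤ ∑ n ∈ range k, a n := by exact_mod_cast hs0
      have hst := stepFn_gt R b k (s := ∑ n ∈ range k, a n) hsz
      rw [haf k]
      push_cast at hst ⊢
      exact hst
  have hapos : ∀ k, 0 < a k := by
    intro k
    obtain ⟨h1, h2⟩ := key k
    have : (0 : ℚ) < (a k : ℚ) := by nlinarith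
    exact_mod_cast this
  have haposQ : ∀ k, (0 : ℚ) < (a k : ℚ) := fun k => by exact_mod_cast hapos k
  have hmono : StrictMono a := by
    refine strictMono_nat_of_lt_succ fun k => ?_
    obtain ⟨hs, h2⟩ := key (k + 1)
    have hle : (a k : ℚ) ≤ ∑ n ∈ range (k + 1), (a n : ℚ) :=
      Finset.single_le_sum (f := fun n => (a n : ℚ)) (fun n _ => (haposQ n).le)
        (mem_range.mpr (Nat.lt_succ_self k))
    have : (a k : ℚ) < (a (k + 1) : ℚ) := by nlinarith
    exact_mod_cast this
  have hgrow : ∀ k, (∑ i, |c i|) * ∑ n ∈ range k, ((a n : ℚ)) < deltaC c * (a k : ℚ) := by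
    intro k
    obtain ⟨hs0, h2⟩ := key k
    have hC : deltaC c * (C₀ / deltaC c) = C₀ := mul_div_cancel₀ _ hδ.ne'
    rw [hRdef] at h2
    rw [← hC₀]
    nlinarith [mul_lt_mul_of_pos_left h2 hδ, mul_nonneg hδ.le hs0]
  refine ⟨a, hmono, hapos, ⟨⟨(a 0 : ℚ), ⟨a 0, ⟨0, rfl⟩, rfl⟩⟩, ?_⟩, ?_⟩
  · intro f f' hf hf' hsum
    have hex : ∀ i, ∃ k, ((a k : ℤ) : ℚ) = f i := by
      intro i
      rcases hf i with ⟨z, ⟨k, hk⟩, hz⟩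
      exact ⟨k, by rw [hk]; exact hz⟩
    have hex' : ∀ i, ∃ k, ((a k : ℤ) : ℚ) = f' i := by
      intro i
      rcases hf' i with ⟨z, ⟨k, hk⟩, hz⟩
      exact ⟨k, by rw [hk]; exact hz⟩
    choose x hx using hex
    choose y hy using hex'
    have e1 : ∑ i, c i * ((a (x i) : ℤ) : ℚ) = ∑ i, c i • f i :=
      Finset.sum_congr rfl fun i _ => by rw [smul_eq_mul, hx i]
    have e2 : ∑ i, c i * ((a (y i) : ℤ) : ℚ) = ∑ i, c i • f' i :=
      Finset.sum_congr rfl fun i _ => by rw [smul_eq_mul, hy i]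
    have hxy : x = y :=
      sidon_core c hN' (fun k => ((a k : ℤ) : ℚ)) haposQ hgrow x y
        (e1.trans (hsum.trans e2.symm))
    funext i
    rw [← hx i, ← hy i, hxy]
  · intro p hp
    haveI : Fact p.Prime := ⟨hp⟩
    have hub : ∀ k, p ≤ k → ((padicNorm p ((a k : ℚ) - (b k : ℚ))) : ℝ) ≤ ((p : ℝ)⁻¹) ^ k := by
      intro k hk
      have hdvd : ((p : ℤ) ^ k) ∣ (a k - b k) := by
        have h1 : Mseq k ∣ a k - b k := by rw [haf k]; exact stepFn_dvd R b k _
        refine dvd_trans ?_ h1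
        rw [Mseq]
        exact pow_dvd_pow_of_dvd (by exact_mod_cast Nat.dvd_factorial hp.pos hk) k
      have h2 : padicNorm p ((a k - b k : ℤ) : ℚ) ≤ (p : ℚ) ^ (-(k : ℤ)) :=
        padicNorm.dvd_iff_norm_le.mp (by exact_mod_cast hdvd)
      have h3 : ((a k - b k : ℤ) : ℚ) = (a k : ℚ) - (b k : ℚ) := by push_cast; ring
      rw [h3] at h2
      have h4 : ((padicNorm p ((a k : ℚ) - (b k : ℚ))) : ℝ) ≤ (((p : ℚ) ^ (-(k : ℤ)) : ℚ) : ℝ) := by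
        exact_mod_cast h2
      refine h4.trans (le_of_eq ?_)
      push_cast
      rw [zpow_neg, zpow_natCast, ← inv_pow]
    have hp1 : (1 : ℝ) < (p : ℝ) := by exact_mod_cast hp.one_lt
    have hlim : Tendsto (fun k : ℕ => ((p : ℝ)⁻¹) ^ k) atTop (nhds 0) :=
      tendsto_pow_atTop_nhds_zero_of_lt_one (by positivity) (inv_lt_one_of_one_lt₀ hp1)
    refine tendsto_of_tendsto_of_tendsto_of_le_of_le' tendsto_const_nhds hlim
      (Eventually.of_forall fun k => by exact_mod_cast padicNorm.nonneg _)
      (eventually_atTop.mpr ⟨p, hub⟩)
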